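/- Let λ and μ be noncrossing partitions of size n. Then λ ⪯ μ if and only if for all 1 ≤ k ≤ n both |λ⁺ ∩ {1,…,k−1}| − |λ⁻ ∩ {1,…,k}| ≤ |μ⁺ ∩ {1,…,k−1}| − |μ⁻ ∩ {1,…,k}| and |λ⁺ ∩ {1,…,k}| − |λ⁻ ∩ {1,…,k}| ≤ |μ⁺ ∩ {1,…,k}| − |μ⁻ ∩ {1,…,k}| (differences taken in ℤ). -/

import Mathlib

open scoped Classical

noncomputable section

/-- `IsNCP n A` : `A` is the arc set of a noncrossing partition of size `n`
(arcs `(i,j)` with `i < j`; no two distinct arcs `(i,k)`, `(j,l)` with `i ≤ j < k ≤ l`,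
i.e. no crossings and no shared endpoints). -/
def IsNCP (n : ℕ) (A : Finset (Fin n × Fin n)) : Prop :=
  (∀ p ∈ A, p.1 < p.2) ∧
    ∀ p ∈ A, ∀ q ∈ A, p ≠ q → ¬(p.1 ≤ q.1 ∧ q.1 < p.2 ∧ p.2 ≤ q.2)

/-- Noncrossing partitions of size `n` (labelled `1, …, n`, realized as `Fin n`). -/
def NCP (n : ℕ) : Type := {A : Finset (Fin n × Fin n) // IsNCP n A}

noncomputable instance (n : ℕ) : Fintype (NCP n) := by
  unfold NCP; infer_instance

namespace NCP

variable {n : ℕ}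

/-- The set `λ⁺` of left endpoints of arcs. -/
def lpos (lam : NCP n) : Finset (Fin n) := lam.1.image Prod.fst

/-- The set `λ⁻` of right endpoints of arcs. -/
def rpos (lam : NCP n) : Finset (Fin n) := lam.1.image Prod.snd

/-- `a` and `b` lie in the same connected component of `λ` viewed as a graph. -/
def Connected (lam : NCP n) (a b : Fin n) : Prop :=
  Relation.ReflTransGen (fun x y => (x, y) ∈ lam.1 ∨ (y, x) ∈ lam.1) a b

/-- The connected component of `j` in `λ`. -/
def component (lam : NCP n) (j : Fin n) : Finset (Fin n) :=
  Finset.univ.filter fun i => Connected lam j i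

theorem mem_component_self (lam : NCP n) (j : Fin n) : j ∈ component lam j :=
  Finset.mem_filter.mpr ⟨Finset.mem_univ j, Relation.ReflTransGen.refl⟩

/-- The largest element of the connected component of `j` in `λ`. -/
def compMax (lam : NCP n) (j : Fin n) : Fin n :=
  (component lam j).max' ⟨j, mem_component_self lam j⟩

/-- The function underlying the permutation `Q_λ` : `j ↦ i` if `(i,j)` is an arc of `λ`,
and `j ↦` the largest element of the connected component of `j` otherwise. -/
def Qfun (lam : NCP n) (j : Fin n) : Fin n :=
  if h : ∃ i, (i, j) ∈ lam.1 then h.choose else compMax lam j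

/-- `Q` is the permutation `Q_λ`. -/
def IsQ (lam : NCP n) (Q : Equiv.Perm (Fin n)) : Prop :=
  ∀ j, Q j = Qfun lam j

/-- `T` is the permutation `T_λ` : the bijection mapping `λ⁻` onto `λ⁺` in an
order-preserving way and the complement of `λ⁻` onto the complement of `λ⁺` in an
order-preserving way. -/
def IsT (lam : NCP n) (T : Equiv.Perm (Fin n)) : Prop :=
  (∀ j, j ∈ rpos lam ↔ T j ∈ lpos lam) ∧
  (∀ j j', j ∈ rpos lam → j' ∈ rpos lam → j < j' → T j < T j') ∧
  (∀ j j', j ∉ rpos lam → j' ∉ rpos lam → j < j' → T j < T j')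

end NCP

/-- Weak excedance positions `E_pos(w) = {i : i ≤ w(i)}`. -/
def ExcPos {n : ℕ} (w : Equiv.Perm (Fin n)) : Finset (Fin n) :=
  Finset.univ.filter fun i => i ≤ w i

/-- Weak excedance values `E_val(w) = {w(i) : i ≤ w(i)}`. -/
def ExcVal {n : ℕ} (w : Equiv.Perm (Fin n)) : Finset (Fin n) :=
  (ExcPos w).image w

/-- The excedance relation `∼`. -/
def ExcEq {n : ℕ} (v w : Equiv.Perm (Fin n)) : Prop :=
  ExcVal v = ExcVal w ∧ ExcPos v = ExcPos w

/-- The excedance relation as a setoid on `S_n`. -/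
def excSetoid (n : ℕ) : Setoid (Equiv.Perm (Fin n)) where
  r := ExcEq
  iseqv := ⟨fun _ => ⟨rfl, rfl⟩, fun h => ⟨h.1.symm, h.2.symm⟩,
    fun h h' => ⟨h.1.trans h'.1, h.2.trans h'.2⟩⟩

namespace NCP

/-- The excedance class `C_λ`. -/
def Cset {n : ℕ} (lam : NCP n) : Set (Equiv.Perm (Fin n)) :=
  {w | ExcVal w = Finset.univ \ lpos lam ∧ ExcPos w = Finset.univ \ rpos lam}

end NCP

/-- Number of inversions of a permutation. -/
def bruhatLen {n : ℕ} (w : Equiv.Perm (Fin n)) : ℕ :=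
  (Finset.univ.filter fun p : Fin n × Fin n => p.1 < p.2 ∧ w p.2 < w p.1).card

/-- The Bruhat order on `S_n` : generated by `v < w` whenever `w v⁻¹` is a
transposition and `ℓ(v) < ℓ(w)`. -/
def BruhatLE {n : ℕ} (v w : Equiv.Perm (Fin n)) : Prop :=
  Relation.ReflTransGen (fun a b => (b * a⁻¹).IsSwap ∧ bruhatLen a < bruhatLen b) v w

/-- Strict Bruhat order. -/
def BruhatLT {n : ℕ} (v w : Equiv.Perm (Fin n)) : Prop :=
  BruhatLE v w ∧ v ≠ w

/-- `λ` is covered by `μ` : `λ` is obtained from `μ` by removing an arc `(i, i+1)`,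
or by replacing an arc `(i,k)` by two arcs `(i,j)`, `(j,k)` with `i < j < k`
(validity of the result is enforced by `λ` being a noncrossing partition). -/
def NCPCovBy {n : ℕ} (lam mu : NCP n) : Prop :=
  (∃ i j : Fin n, (j : ℕ) = (i : ℕ) + 1 ∧ (i, j) ∈ mu.1 ∧ lam.1 = mu.1.erase (i, j)) ∨
  (∃ i j k : Fin n, i < j ∧ j < k ∧ (i, k) ∈ mu.1 ∧
      lam.1 = insert (i, j) (insert (j, k) (mu.1.erase (i, k))))

/-- The partial order `⪯` on noncrossing partitions generated by the covering relation. -/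
def NCPle {n : ℕ} (lam mu : NCP n) : Prop :=
  Relation.ReflTransGen (fun a b => NCPCovBy a b) lam mu

/-- The defining relations of the Temperley–Lieb algebra `TL_n(2)`. -/
inductive TLRel (n : ℕ) : FreeAlgebra ℂ (Fin (n - 1)) → FreeAlgebra ℂ (Fin (n - 1)) → Prop
  | sq (i : Fin (n - 1)) :
      TLRel n (FreeAlgebra.ι ℂ i * FreeAlgebra.ι ℂ i) (2 * FreeAlgebra.ι ℂ i)
  | far (i j : Fin (n - 1)) (h : (i : ℕ) + 1 < (j : ℕ) ∨ (j : ℕ) + 1 < (i : ℕ)) :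
      TLRel n (FreeAlgebra.ι ℂ i * FreeAlgebra.ι ℂ j) (FreeAlgebra.ι ℂ j * FreeAlgebra.ι ℂ i)
  | near (i j : Fin (n - 1)) (h : (i : ℕ) + 1 = (j : ℕ) ∨ (j : ℕ) + 1 = (i : ℕ)) :
      TLRel n (FreeAlgebra.ι ℂ i * FreeAlgebra.ι ℂ j * FreeAlgebra.ι ℂ i) (FreeAlgebra.ι ℂ i)

/-- The Temperley–Lieb algebra `TL_n(2)`. -/
abbrev TL (n : ℕ) := RingQuot (TLRel n)

/-- The generator `e_i` of `TL_n(2)`. -/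
def TLgen (n : ℕ) (i : Fin (n - 1)) : TL n :=
  RingQuot.mkAlgHom ℂ (TLRel n) (FreeAlgebra.ι ℂ i)

/-- The simple transposition `s_i = (i, i+1)` in `S_n`. -/
def simpleTransposition (n : ℕ) (i : Fin (n - 1)) : Equiv.Perm (Fin n) :=
  Equiv.swap ⟨i.val, lt_of_lt_of_le i.isLt (Nat.sub_le n 1)⟩
    ⟨i.val + 1, by have h := i.isLt; omega⟩

open MvPolynomial

/-- The monomial quasisymmetric polynomial `M_α` in `n` variables,
for a composition `α = (α 0, …, α (k-1))`. -/
noncomputable def Mpoly (n k : ℕ) (α : Fin k → ℕ) : MvPolynomial (Fin n) ℚ :=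
  ∑ c ∈ Finset.univ.filter (fun c : Fin k → Fin n => StrictMono c),
    ∏ s : Fin k, X (c s) ^ α s

/-- The vanishing polynomial `P_α`.  The sum over pairs (a coarsening `β ⪰ α` with
blocks witnessed by `1 = f_1 < ⋯ < f_{ℓ+1} = k+1`, and indices `i_1 < ⋯ < i_ℓ`)
is re-indexed by monotone maps `c : Fin k → Fin n`: the fibers of `c` are the blocks of
the coarsening, and `c` sends the `j`-th block to `i_j`.  The variable with 1-based label
`i` is `x_i`, so the rational constant attached to `c s : Fin n` is `(c s : ℕ) + 1`. -/
noncomputable def Ppoly (n k : ℕ) (α : Fin k → ℕ) : MvPolynomial (Fin n) ℚ :=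
  ∑ c ∈ Finset.univ.filter (fun c : Fin k → Fin n => Monotone c),
    ∏ s : Fin k,
      if ∀ t, t < s → c t < c s then
        X (c s) ^ α s - C ((((c s : ℕ) : ℚ) + 1) ^ α s)
      else C ((-(((c s : ℕ) : ℚ) + 1)) ^ α s)

/-- The top-degree homogeneous component `h(f)`. -/
noncomputable def topHom {n : ℕ} (f : MvPolynomial (Fin n) ℚ) : MvPolynomial (Fin n) ℚ :=
  MvPolynomial.homogeneousComponent f.totalDegree f

/-- The set `QSV_n ⊆ S_n`. -/
def QSVset (n : ℕ) : Set (Equiv.Perm (Fin n)) := {σ | ∃ lam : NCP n, NCP.IsQ lam σ}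

/-- The point `(σ(1), …, σ(n)) ∈ ℚⁿ` associated to a permutation (1-based labels). -/
def permPoint {n : ℕ} (σ : Equiv.Perm (Fin n)) : Fin n → ℚ := fun i => ((σ i : ℕ) : ℚ) + 1

/-- `QSV_n` as a set of points in `ℚⁿ`. -/
def QSVpoints (n : ℕ) : Set (Fin n → ℚ) := {p | ∃ σ ∈ QSVset n, p = permPoint σ}

/-- The vanishing ideal of a set of points in `ℚⁿ`. -/
noncomputable def vanishingIdeal (n : ℕ) (S : Set (Fin n → ℚ)) :
    Ideal (MvPolynomial (Fin n) ℚ) where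
  carrier := {f | ∀ p ∈ S, MvPolynomial.eval p f = 0}
  add_mem' := by
    intro a b ha hb p hp
    simp [map_add, ha p hp, hb p hp]
  zero_mem' := by
    intro p hp
    simp
  smul_mem' := by
    intro c f hf p hp
    simp [smul_eq_mul, map_mul, hf p hp]

/-- The monomial quasisymmetric polynomials `M_α` for nonempty compositions `α`
with `ℓ(α) ≤ n`. -/
def MpolySet (n : ℕ) : Set (MvPolynomial (Fin n) ℚ) :=
  {f | ∃ k, ∃ α : Fin k → ℕ, 0 < k ∧ k ≤ n ∧ (∀ s, 0 < α s) ∧ f = Mpoly n k α}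

/-- The vanishing polynomials `P_α` for nonempty compositions `α` with `ℓ(α) ≤ n`. -/
def PpolySet (n : ℕ) : Set (MvPolynomial (Fin n) ℚ) :=
  {f | ∃ k, ∃ α : Fin k → ℕ, 0 < k ∧ k ≤ n ∧ (∀ s, 0 < α s) ∧ f = Ppoly n k α}

/-- The space `QSym_n` of quasisymmetric polynomials : the span of `1` and the `M_α`. -/
def QSym (n : ℕ) : Submodule ℚ (MvPolynomial (Fin n) ℚ) :=
  Submodule.span ℚ (insert 1 (MpolySet n))

/-- `QSym_n⁺` : quasisymmetric polynomials with zero constant term. -/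
def QSymPlus (n : ℕ) : Set (MvPolynomial (Fin n) ℚ) :=
  {f | f ∈ QSym n ∧ MvPolynomial.constantCoeff f = 0}

/-- `gr(I) = ⟨h(f) : f ∈ I⟩`. -/
noncomputable def grIdeal (n : ℕ) (I : Ideal (MvPolynomial (Fin n) ℚ)) :
    Ideal (MvPolynomial (Fin n) ℚ) :=
  Ideal.span (topHom '' (I : Set (MvPolynomial (Fin n) ℚ)))

/-!
Reading the points `1, …, n` from left to right, alternately with the gaps between them, and
counting the arcs passing over each position gives a zigzag lattice path: it can only go down
when entering a point (at a right endpoint) and only go up when leaving it (at a left endpoint).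
The two families of inequalities say exactly that the path of `λ` stays below the path of `μ`.

Each covering move lowers the path at a single position: removing an arc `(i, i+1)` cuts off a
peak, and splitting an arc at `j` lowers the path at the point `j`. Conversely, if the path of
`λ` is below a different path of `μ`, then at a highest position where they differ the path of
`μ` has either a peak, which can only come from an arc `(i, i+1)`, or is flat across a point
that no arc touches, where the innermost arc over it can be split. Either move keeps the path
above that of `λ` and lowers the area under it, so induction on that area concludes, since
matching brackets show that a noncrossing partition is determined by its path.
-/

def IsZigzag (g : ℕ → ℕ) : Prop :=
  ∀ k, g (2 * k + 1) ≤ g (2 * k) ∧ g (2 * k) ≤ g (2 * k + 1) + 1 ∧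
    g (2 * k + 1) ≤ g (2 * k + 2) ∧ g (2 * k + 2) ≤ g (2 * k + 1) + 1

namespace IsZigzag

variable {f g : ℕ → ℕ}

theorem flat_of_isMax (hf : IsZigzag f) (hg : IsZigzag g) {M : ℕ}
    (hmax : ∀ t, f t < g t → g t ≤ M) {k : ℕ} (hk : f (2 * k + 1) < g (2 * k + 1))
    (hM : g (2 * k + 1) = M) : g (2 * k) = M ∧ g (2 * k + 2) = M := by
  have := hf k
  have := hg k
  have := hmax (2 * k)
  have := hmax (2 * k + 2)
  omega

theorem exists_flat_or_peak (hf : IsZigzag f) (hg : IsZigzag g) {N : ℕ} (hg0 : g 0 = 0)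
    (hgN : ∀ s, N ≤ s → g s = 0) (hle : ∀ s, f s ≤ g s) (hne : f ≠ g) :
    (∃ k, f (2 * k + 1) < g (2 * k + 1) ∧ g (2 * k) = g (2 * k + 1) ∧
      g (2 * k + 2) = g (2 * k + 1)) ∨
    (∃ k, f (2 * k + 2) < g (2 * k + 2) ∧ g (2 * k + 1) + 1 = g (2 * k + 2) ∧
      g (2 * k + 3) + 1 = g (2 * k + 2)) := by
  have hS : ∀ t, f t < g t → t ∈ (Finset.range N).filter fun t => f t < g t := by
    intro t ht
    refine Finset.mem_filter.2 ⟨Finset.mem_range.2 (not_le.1 fun h => ?_), ht⟩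
    have := hgN t h
    omega
  obtain ⟨s, hs, hmax⟩ : ∃ s, f s < g s ∧ ∀ t, f t < g t → g t ≤ g s := by
    obtain ⟨s, hs⟩ := Function.ne_iff.1 hne
    obtain ⟨s, hsS, hmax⟩ := Finset.exists_max_image _ g
      ⟨s, hS s (lt_of_le_of_ne (hle s) hs)⟩
    exact ⟨s, (Finset.mem_filter.1 hsS).2, fun t ht => hmax t (hS t ht)⟩
  obtain ⟨k, rfl | rfl⟩ := Nat.even_or_odd' s
  · obtain _ | k := k
    · simp [hg0] at hs
    rw [mul_add_one] at hs hmax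
    have := hf k
    have := hg k
    have hf' := hf (k + 1)
    have hg' := hg (k + 1)
    simp only [mul_add_one, add_assoc, Nat.reduceAdd] at hf' hg'
    by_cases hl : g (2 * k + 1) = g (2 * k + 2)
    · have := flat_of_isMax hf hg hmax (k := k) (by omega) hl
      exact Or.inl ⟨k, by omega, by omega, by omega⟩
    by_cases hr : g (2 * k + 3) = g (2 * k + 2)
    · refine Or.inl ⟨k + 1, ?_⟩
      have := flat_of_isMax hf hg hmax (k := k + 1)
      simp only [mul_add_one, add_assoc, Nat.reduceAdd] at this ⊢
      have := this (by omega) hr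
      omega
    · exact Or.inr ⟨k, hs, by omega, by omega⟩
  · exact Or.inl ⟨k, hs, flat_of_isMax hf hg hmax hs rfl⟩

end IsZigzag

theorem IsNCP.mono {n : ℕ} {A B : Finset (Fin n × Fin n)} (hB : IsNCP n B) (hAB : A ⊆ B) :
    IsNCP n A :=
  ⟨fun p hp => hB.1 p (hAB hp), fun p hp q hq => hB.2 p (hAB hp) q (hAB hq)⟩

theorem IsNCP.insert {n : ℕ} {A : Finset (Fin n × Fin n)} {x : Fin n × Fin n} (hA : IsNCP n A)
    (hx : x.1 < x.2)
    (hcross : ∀ q ∈ A, q ≠ x →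
      ¬(x.1 ≤ q.1 ∧ q.1 < x.2 ∧ x.2 ≤ q.2) ∧ ¬(q.1 ≤ x.1 ∧ x.1 < q.2 ∧ q.2 ≤ x.2)) :
    IsNCP n (insert x A) := by
  refine ⟨fun p hp => ?_, fun p hp q hq hpq => ?_⟩
  · rcases Finset.mem_insert.1 hp with rfl | hp
    exacts [hx, hA.1 p hp]
  · rcases Finset.mem_insert.1 hp with rfl | hpA <;>
      rcases Finset.mem_insert.1 hq with rfl | hqA
    · exact absurd rfl hpq
    · exact (hcross q hqA (Ne.symm hpq)).1
    · exact (hcross p hpA hpq).2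
    · exact hA.2 p hpA q hqA hpq

namespace NCP

open Finset

variable {n : ℕ}

theorem injOn_fst (lam : NCP n) : Set.InjOn Prod.fst (lam.1 : Set (Fin n × Fin n)) := by
  intro p hp q hq h
  by_contra hpq
  have := lam.2.1 p hp
  have := lam.2.1 q hq
  rcases le_total p.2 q.2 with hle | hle
  · exact lam.2.2 p hp q hq hpq ⟨by omega, by omega, hle⟩
  · exact lam.2.2 q hq p hp (Ne.symm hpq) ⟨by omega, by omega, hle⟩

theorem injOn_snd (lam : NCP n) : Set.InjOn Prod.snd (lam.1 : Set (Fin n × Fin n)) := by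
  intro p hp q hq h
  by_contra hpq
  have := lam.2.1 p hp
  have := lam.2.1 q hq
  rcases le_total p.1 q.1 with hle | hle
  · exact lam.2.2 p hp q hq hpq ⟨hle, by omega, by omega⟩
  · exact lam.2.2 q hq p hp (Ne.symm hpq) ⟨hle, by omega, by omega⟩

theorem card_filter_lpos (lam : NCP n) (P : Fin n → Prop) [DecidablePred P] :
    #{a ∈ lam.lpos | P a} = #{p ∈ lam.1 | P p.1} := by
  rw [lpos, filter_image, card_image_of_injOn (lam.injOn_fst.mono (filter_subset _ _))]

theorem card_filter_rpos (lam : NCP n) (P : Fin n → Prop) [DecidablePred P] :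
    #{a ∈ lam.rpos | P a} = #{p ∈ lam.1 | P p.2} := by
  rw [rpos, filter_image, card_image_of_injOn (lam.injOn_snd.mono (filter_subset _ _))]

/-- In doubled coordinates slot `2 * p + 1` is the point `p` and slot `2 * p` the gap just
before it; `depth lam s` is the number of arcs passing over slot `s`. -/
def depth (lam : NCP n) (s : ℕ) : ℕ :=
  #{p ∈ lam.1 | 2 * (p.1 : ℕ) + 1 < s ∧ s < 2 * (p.2 : ℕ) + 1}

theorem depth_eq_sum (lam : NCP n) (s : ℕ) :
    lam.depth s = ∑ p ∈ lam.1, if 2 * (p.1 : ℕ) + 1 < s ∧ s < 2 * (p.2 : ℕ) + 1 then 1 else 0 :=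
  card_filter _ _

theorem depth_eq_zero (lam : NCP n) {s : ℕ} (hs : s = 0 ∨ 2 * n ≤ s) : lam.depth s = 0 := by
  rw [depth, card_eq_zero, filter_eq_empty_iff]
  intro p _
  omega

theorem depth_two_mul (lam : NCP n) (k : ℕ) :
    lam.depth (2 * k) = lam.depth (2 * k + 1) + #{p ∈ lam.1 | (p.2 : ℕ) = k} := by
  rw [depth_eq_sum, depth_eq_sum, card_filter, ← sum_add_distrib]
  refine sum_congr rfl fun p hp => ?_
  have := lam.2.1 p hp
  split_ifs <;> omega

theorem depth_two_mul_add_two (lam : NCP n) (k : ℕ) :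
    lam.depth (2 * k + 2) = lam.depth (2 * k + 1) + #{p ∈ lam.1 | (p.1 : ℕ) = k} := by
  rw [depth_eq_sum, depth_eq_sum, card_filter, ← sum_add_distrib]
  refine sum_congr rfl fun p hp => ?_
  have := lam.2.1 p hp
  split_ifs <;> omega

theorem card_filter_fst_eq_le_one (lam : NCP n) (k : ℕ) : #{p ∈ lam.1 | (p.1 : ℕ) = k} ≤ 1 :=
  card_le_one.2 fun p hp q hq =>
    lam.injOn_fst (mem_filter.1 hp).1 (mem_filter.1 hq).1 (by grind)

theorem card_filter_snd_eq_le_one (lam : NCP n) (k : ℕ) : #{p ∈ lam.1 | (p.2 : ℕ) = k} ≤ 1 :=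
  card_le_one.2 fun p hp q hq =>
    lam.injOn_snd (mem_filter.1 hp).1 (mem_filter.1 hq).1 (by grind)

theorem isZigzag_depth (lam : NCP n) : IsZigzag lam.depth := fun k => by
  have := lam.depth_two_mul k
  have := lam.depth_two_mul_add_two k
  have := lam.card_filter_fst_eq_le_one k
  have := lam.card_filter_snd_eq_le_one k
  omega

theorem depth_add_of_eq_erase {nu mu : NCP n} {a : Fin n × Fin n} (ha : a ∈ mu.1)
    (h : nu.1 = mu.1.erase a) (s : ℕ) :
    nu.depth s + (if 2 * (a.1 : ℕ) + 1 < s ∧ s < 2 * (a.2 : ℕ) + 1 then 1 else 0) =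
      mu.depth s := by
  rw [depth_eq_sum, depth_eq_sum, h, sum_erase_add _ _ ha]

theorem depth_add_of_eq_split {nu mu : NCP n} {i j k : Fin n} (hij : i < j) (hjk : j < k)
    (hik : (i, k) ∈ mu.1) (h : nu.1 = insert (i, j) (insert (j, k) (mu.1.erase (i, k))))
    (s : ℕ) : nu.depth s + (if s = 2 * (j : ℕ) + 1 then 1 else 0) = mu.depth s := by
  have hij_mem : (i, j) ∉ insert (j, k) (mu.1.erase (i, k)) := by
    simp only [mem_insert, mem_erase, Prod.mk.injEq, not_or, not_and]
    refine ⟨fun h => absurd h hij.ne, fun hne hmem => hne ?_⟩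
    exact mu.injOn_fst hmem hik rfl
  have hjk_mem : (j, k) ∉ mu.1.erase (i, k) := fun hmem =>
    (mem_erase.1 hmem).1 (mu.injOn_snd (mem_erase.1 hmem).2 hik rfl)
  rw [depth_eq_sum, depth_eq_sum, h, sum_insert hij_mem, sum_insert hjk_mem,
    ← sum_erase_add _ _ hik]
  dsimp only
  split_ifs <;> omega

theorem depth_le_of_covBy {nu mu : NCP n} (h : NCPCovBy nu mu) (s : ℕ) :
    nu.depth s ≤ mu.depth s := by
  rcases h with ⟨i, j, -, hij, h⟩ | ⟨i, j, k, hij, hjk, hik, h⟩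
  · exact (depth_add_of_eq_erase hij h s).symm ▸ Nat.le_add_right _ _
  · exact (depth_add_of_eq_split hij hjk hik h s).symm ▸ Nat.le_add_right _ _

theorem depth_le_of_le {lam mu : NCP n} (h : NCPle lam mu) (s : ℕ) :
    lam.depth s ≤ mu.depth s := by
  induction h with
  | refl => exact le_rfl
  | tail _ hcov ih => exact ih.trans (depth_le_of_covBy hcov s)

theorem fst_mem_lpos {lam : NCP n} {p : Fin n × Fin n} (hp : p ∈ lam.1) : p.1 ∈ lam.lpos :=
  mem_image_of_mem _ hp

theorem snd_mem_rpos {lam : NCP n} {p : Fin n × Fin n} (hp : p ∈ lam.1) : p.2 ∈ lam.rpos :=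
  mem_image_of_mem _ hp

theorem mem_lpos_iff_depth_lt (lam : NCP n) (k : Fin n) :
    k ∈ lam.lpos ↔ lam.depth (2 * k + 1) < lam.depth (2 * k + 2) := by
  rw [depth_two_mul_add_two, Nat.lt_add_right_iff_pos, card_pos, filter_nonempty_iff, lpos,
    mem_image]
  simp only [Fin.val_inj]

theorem mem_rpos_iff_depth_lt (lam : NCP n) (k : Fin n) :
    k ∈ lam.rpos ↔ lam.depth (2 * k + 1) < lam.depth (2 * k) := by
  rw [depth_two_mul, Nat.lt_add_right_iff_pos, card_pos, filter_nonempty_iff, rpos, mem_image]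
  simp only [Fin.val_inj]

/-- `q.1` is the left end of an arc of `lam` nested in `p`, and `ih` makes its right end that of
`q`. -/
theorem not_fst_lt_of_snd_eq {lam mu : NCP n} (hl : lam.lpos = mu.lpos)
    (hr : lam.rpos = mu.rpos) {p q : Fin n × Fin n} (hp : p ∈ lam.1) (hq : q ∈ mu.1)
    (hpq : p.2 = q.2) (ih : ∀ r ∈ lam.1, ∀ r' ∈ mu.1, r.2 = r'.2 → r.2 < p.2 → r.1 = r'.1) :
    ¬p.1 < q.1 := by
  intro hlt
  obtain ⟨r, hr_mem, hr1⟩ := mem_image.1 (hl ▸ fst_mem_lpos hq)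
  have := mu.2.1 q hq
  have hr2 : r.2 < p.2 := by
    by_contra hle
    exact lam.2.2 p hp r hr_mem (by grind) ⟨by omega, by omega, by omega⟩
  obtain ⟨r', hr'_mem, hr'2⟩ := mem_image.1 (hr ▸ snd_mem_rpos hr_mem)
  obtain rfl : r' = q :=
    mu.injOn_fst hr'_mem hq ((ih r hr_mem r' hr'_mem hr'2.symm hr2).symm.trans hr1)
  omega

theorem fst_eq_of_snd_eq {lam mu : NCP n} (hl : lam.lpos = mu.lpos) (hr : lam.rpos = mu.rpos)
    {p q : Fin n × Fin n} (hp : p ∈ lam.1) (hq : q ∈ mu.1) (hpq : p.2 = q.2) : p.1 = q.1 := by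
  induction hj : (p.2 : ℕ) using Nat.strong_induction_on generalizing lam mu p q with
  | _ j ih =>
    have ih' : ∀ {lam mu : NCP n}, lam.lpos = mu.lpos → lam.rpos = mu.rpos →
        ∀ r ∈ lam.1, ∀ r' ∈ mu.1, r.2 = r'.2 → r.2 < p.2 → r.1 = r'.1 :=
      fun hl hr r hr_mem r' hr'_mem h hlt => ih _ (by omega) hl hr hr_mem hr'_mem h rfl
    rcases lt_trichotomy p.1 q.1 with hlt | heq | hgt
    · exact absurd hlt (not_fst_lt_of_snd_eq hl hr hp hq hpq (ih' hl hr))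
    · exact heq
    · exact absurd hgt (not_fst_lt_of_snd_eq hl.symm hr.symm hq hp hpq.symm
        fun r hr_mem r' hr'_mem h hlt => ih' hl.symm hr.symm r hr_mem r' hr'_mem h (hpq ▸ hlt))

theorem eq_of_lpos_eq_of_rpos_eq {lam mu : NCP n} (hl : lam.lpos = mu.lpos)
    (hr : lam.rpos = mu.rpos) : lam = mu := by
  have subset : ∀ {lam mu : NCP n}, lam.lpos = mu.lpos → lam.rpos = mu.rpos → lam.1 ⊆ mu.1 := by
    intro lam mu hl hr p hp
    obtain ⟨q, hq, hq2⟩ := mem_image.1 (hr ▸ snd_mem_rpos hp)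
    rwa [Prod.ext (fst_eq_of_snd_eq hl hr hp hq hq2.symm) hq2.symm]
  exact Subtype.ext (subset_antisymm (subset hl hr) (subset hl.symm hr.symm))

theorem eq_of_depth_eq {lam mu : NCP n} (h : lam.depth = mu.depth) : lam = mu := by
  refine eq_of_lpos_eq_of_rpos_eq ?_ ?_ <;> ext k
  · rw [mem_lpos_iff_depth_lt, mem_lpos_iff_depth_lt, h]
  · rw [mem_rpos_iff_depth_lt, mem_rpos_iff_depth_lt, h]

theorem exists_covBy_of_peak (mu : NCP n) {k : ℕ}
    (hup : mu.depth (2 * k + 1) < mu.depth (2 * k + 2))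
    (hdown : mu.depth (2 * k + 3) < mu.depth (2 * k + 2)) :
    ∃ nu, NCPCovBy nu mu ∧ ∀ s, nu.depth s + (if s = 2 * k + 2 then 1 else 0) = mu.depth s := by
  have hopen : 0 < #{p ∈ mu.1 | (p.1 : ℕ) = k} := by
    have := mu.depth_two_mul_add_two k
    omega
  have hclose : 0 < #{p ∈ mu.1 | (p.2 : ℕ) = k + 1} := by
    have := mu.depth_two_mul (k + 1)
    rw [show 2 * (k + 1) = 2 * k + 2 by ring, show 2 * k + 2 + 1 = 2 * k + 3 by ring] at this
    omega
  obtain ⟨a, ha⟩ := card_pos.1 hopen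
  obtain ⟨b, hb⟩ := card_pos.1 hclose
  rw [mem_filter] at ha hb
  -- the arc opening at `k` and the arc closing at `k + 1` coincide, or they would cross
  have hab : a = b := by
    by_contra hne
    have := mu.2.1 a ha.1
    have := mu.2.1 b hb.1
    have hb1 : (b.1 : ℕ) ≠ k := fun h => hne (mu.injOn_fst ha.1 hb.1 (by omega))
    exact mu.2.2 b hb.1 a ha.1 (Ne.symm hne) ⟨by omega, by omega, by omega⟩
  subst hab
  let nu : NCP n := ⟨mu.1.erase a, mu.2.mono (erase_subset _ _)⟩
  refine ⟨nu, Or.inl ⟨a.1, a.2, by omega, ha.1, rfl⟩, fun s => ?_⟩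
  rw [← depth_add_of_eq_erase (nu := nu) ha.1 rfl s]
  congr 1
  split_ifs <;> omega

theorem isNCP_split (mu : NCP n) {i j k : Fin n} (hik : (i, k) ∈ mu.1) (hij : i < j)
    (hjk : j < k) (hfree : ∀ a ∈ mu.1, a.1 ≠ j ∧ a.2 ≠ j)
    (hinner : ∀ a ∈ mu.1, a.1 < j → j < a.2 → a.1 ≤ i) :
    IsNCP n (insert (i, j) (insert (j, k) (mu.1.erase (i, k)))) := by
  have facts : ∀ q ∈ mu.1.erase (i, k), q.1 < q.2 ∧ q.1 ≠ i ∧ (q.1 ≠ j ∧ q.2 ≠ j) ∧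
      (q.1 < j → j < q.2 → q.1 ≤ i) ∧ ¬(q.1 ≤ i ∧ i < q.2 ∧ q.2 ≤ k) ∧
      ¬(i ≤ q.1 ∧ q.1 < k ∧ k ≤ q.2) := fun q hq => by
    obtain ⟨hne, hq⟩ := mem_erase.1 hq
    exact ⟨mu.2.1 q hq, fun h => hne (mu.injOn_fst hq hik h), hfree q hq, hinner q hq,
      mu.2.2 q hq _ hik hne, mu.2.2 _ hik q hq (Ne.symm hne)⟩
  refine ((mu.2.mono (erase_subset _ _)).insert hjk fun q hq _ => ?_).insert hij fun q hq _ => ?_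
  · have := facts q hq
    dsimp only
    omega
  · rcases mem_insert.1 hq with rfl | hq
    · dsimp only
      omega
    · have := facts q hq
      dsimp only
      omega

theorem exists_covBy_of_flat (mu : NCP n) {k : ℕ} (hpos : 0 < mu.depth (2 * k + 1))
    (hleft : mu.depth (2 * k) = mu.depth (2 * k + 1))
    (hright : mu.depth (2 * k + 2) = mu.depth (2 * k + 1)) :
    ∃ nu, NCPCovBy nu mu ∧ ∀ s, nu.depth s + (if s = 2 * k + 1 then 1 else 0) = mu.depth s := by
  rw [depth_two_mul, Nat.add_eq_left, card_eq_zero, filter_eq_empty_iff] at hleft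
  rw [depth_two_mul_add_two, Nat.add_eq_left, card_eq_zero, filter_eq_empty_iff] at hright
  -- the innermost arc over the point `k` is split there
  obtain ⟨⟨i, m⟩, him, hmax⟩ := exists_max_image _ (fun a : Fin n × Fin n => a.1) (card_pos.1 hpos)
  obtain ⟨him, hik, hkm⟩ := mem_filter.1 him
  dsimp only at hik hkm
  obtain ⟨j, hj⟩ : ∃ j : Fin n, (j : ℕ) = k := ⟨⟨k, by omega⟩, rfl⟩
  have hij : i < j := by omega
  have hjm : j < m := by omega
  have hnu := mu.isNCP_split him hij hjm
    (fun a ha => ⟨fun h => hright ha (by omega), fun h => hleft ha (by omega)⟩)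
    (fun a ha h1 h2 => hmax a (mem_filter.2 ⟨ha, by omega, by omega⟩))
  refine ⟨⟨_, hnu⟩, Or.inr ⟨i, j, m, hij, hjm, him, rfl⟩, fun s => ?_⟩
  rw [← hj]
  exact depth_add_of_eq_split hij hjm him rfl s

def totalDepth (lam : NCP n) : ℕ := ∑ s ∈ range (2 * n), lam.depth s

theorem totalDepth_lt {nu mu : NCP n} {t : ℕ}
    (h : ∀ s, nu.depth s + (if s = t then 1 else 0) = mu.depth s) :
    nu.totalDepth < mu.totalDepth := by
  have ht : t < 2 * n := by
    by_contra ht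
    have := h t
    rw [mu.depth_eq_zero (Or.inr (not_lt.1 ht))] at this
    simp at this
  refine sum_lt_sum (fun s _ => ?_) ⟨t, mem_range.2 ht, ?_⟩
  · rw [← h s]
    exact Nat.le_add_right _ _
  · rw [← h t, if_pos rfl]
    exact Nat.lt_succ_self _

theorem exists_covBy_between {lam mu : NCP n} (hle : ∀ s, lam.depth s ≤ mu.depth s)
    (hne : lam.depth ≠ mu.depth) :
    ∃ nu, NCPCovBy nu mu ∧ (∀ s, lam.depth s ≤ nu.depth s) ∧ nu.totalDepth < mu.totalDepth := by
  obtain ⟨t, hlt, nu, hcov, hnu⟩ : ∃ t, lam.depth t < mu.depth t ∧ ∃ nu, NCPCovBy nu mu ∧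
      ∀ s, nu.depth s + (if s = t then 1 else 0) = mu.depth s := by
    rcases lam.isZigzag_depth.exists_flat_or_peak mu.isZigzag_depth
        (mu.depth_eq_zero (Or.inl rfl)) (fun s hs => mu.depth_eq_zero (Or.inr hs)) hle hne with
      ⟨k, hlt, hleft, hright⟩ | ⟨k, hlt, hup, hdown⟩
    · exact ⟨_, hlt, mu.exists_covBy_of_flat (by omega) hleft hright⟩
    · exact ⟨_, hlt, mu.exists_covBy_of_peak (by omega) (by omega)⟩
  refine ⟨nu, hcov, fun s => ?_, totalDepth_lt hnu⟩
  have hs := hnu s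
  have := hle s
  split_ifs at hs with hst
  · subst hst
    omega
  · omega

theorem le_of_depth_le {lam mu : NCP n} (h : ∀ s, lam.depth s ≤ mu.depth s) : NCPle lam mu := by
  induction hm : mu.totalDepth using Nat.strong_induction_on generalizing mu with
  | _ m ih =>
    by_cases heq : lam.depth = mu.depth
    · rw [eq_of_depth_eq heq]
      exact .refl
    obtain ⟨nu, hcov, hle, hlt⟩ := exists_covBy_between h heq
    exact (ih _ (hm ▸ hlt) hle rfl).tail hcov

theorem le_iff_forall_depth_le {lam mu : NCP n} :
    NCPle lam mu ↔ ∀ s, lam.depth s ≤ mu.depth s :=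
  ⟨depth_le_of_le, le_of_depth_le⟩

theorem forall_depth_le_iff {lam mu : NCP n} :
    (∀ s, lam.depth s ≤ mu.depth s) ↔ ∀ k, 1 ≤ k → k ≤ n →
      lam.depth (2 * k - 1) ≤ mu.depth (2 * k - 1) ∧ lam.depth (2 * k) ≤ mu.depth (2 * k) := by
  refine ⟨fun h k _ _ => ⟨h _, h _⟩, fun h s => ?_⟩
  by_cases hs : s = 0 ∨ 2 * n ≤ s
  · rw [lam.depth_eq_zero hs]
    exact Nat.zero_le _
  obtain ⟨k, rfl | rfl⟩ := Nat.even_or_odd' s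
  · exact (h k (by omega) (by omega)).2
  · have := (h (k + 1) (by omega) (by omega)).1
    rwa [show 2 * (k + 1) - 1 = 2 * k + 1 by omega] at this

theorem card_filter_bind_val (s : Finset (Fin n)) (P : ℕ → Prop) [DecidablePred P] :
    #{a ∈ s >>= fun a => pure (a : ℕ) | P a} = #(s.filter fun a : Fin n => P a) := by
  simp only [bind_def, pure_def, sup_singleton_apply, filter_image]
  convert card_image_of_injective _ Fin.val_injective

theorem depth_two_mul_sub_one_eq (lam : NCP n) {k : ℕ} (hk : 1 ≤ k) :
    (lam.depth (2 * k - 1) : ℤ) = #{a ∈ lam.lpos | (a : ℕ) + 1 < k} - #{a ∈ lam.rpos | (a : ℕ) < k} := by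
  rw [card_filter_bind_val, card_filter_bind_val, card_filter_lpos, card_filter_rpos, depth_eq_sum, card_filter, card_filter]
  push_cast
  rw [← sum_sub_distrib]
  refine sum_congr rfl fun p hp => ?_
  have := lam.2.1 p hp
  split_ifs <;> omega

theorem depth_two_mul_eq (lam : NCP n) (k : ℕ) :
    (lam.depth (2 * k) : ℤ) = #{a ∈ lam.lpos | (a : ℕ) < k} - #{a ∈ lam.rpos | (a : ℕ) < k} := by
  rw [card_filter_bind_val, card_filter_bind_val, card_filter_lpos, card_filter_rpos, depth_eq_sum, card_filter, card_filter]
  push_cast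
  rw [← sum_sub_distrib]
  refine sum_congr rfl fun p hp => ?_
  have := lam.2.1 p hp
  split_ifs <;> omega

end NCP

/-- Labels are `0`-based: `{1,…,k} ∩ λ⁺` is `{a ∈ λ⁺ | (a : ℕ) < k}` and `{1,…,k−1} ∩ λ⁺` is
`{a ∈ λ⁺ | (a : ℕ) + 1 < k}`. -/
theorem stmt2 (n : ℕ) (lam mu : NCP n) :
    NCPle lam mu ↔
      ∀ k : ℕ, 1 ≤ k → k ≤ n →
        ((((NCP.lpos lam).filter (fun a => (a : ℕ) + 1 < k)).card : ℤ) -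
            (((NCP.rpos lam).filter (fun a => (a : ℕ) < k)).card : ℤ) ≤
          (((NCP.lpos mu).filter (fun a => (a : ℕ) + 1 < k)).card : ℤ) -
            (((NCP.rpos mu).filter (fun a => (a : ℕ) < k)).card : ℤ)) ∧
        ((((NCP.lpos lam).filter (fun a => (a : ℕ) < k)).card : ℤ) -
            (((NCP.rpos lam).filter (fun a => (a : ℕ) < k)).card : ℤ) ≤
          (((NCP.lpos mu).filter (fun a => (a : ℕ) < k)).card : ℤ) -
            (((NCP.rpos mu).filter (fun a => (a : ℕ) < k)).card : ℤ)) := by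
  rw [NCP.le_iff_forall_depth_le, NCP.forall_depth_le_iff]
  refine forall_congr' fun k => forall_congr' fun hk => forall_congr' fun _ => ?_
  rw [← NCP.depth_two_mul_sub_one_eq lam hk, ← NCP.depth_two_mul_sub_one_eq mu hk,
    ← NCP.depth_two_mul_eq lam, ← NCP.depth_two_mul_eq mu, Nat.cast_le, Nat.cast_le]
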